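/- arXiv:2410.22731 — 2 statements merged into one kernel-verified Lean document; each statement's English description precedes it below -/
import Mathlib

section
/- Let X ∈ ℝ^{N×T} be a matrix of rank r < min{N,T} admitting a thin SVD X = UΣVᵀ with ‖U‖_{2,∞} ≤ √(μ₁ r / N) and ‖V‖_{2,∞} ≤ √(μ₂ r / T) for constants μ₁, μ₂ ≥ 1. Fix δ ∈ (0,1) and ε ∈ (0,1). Let I be a subset of {1,…,N} of size at least 3 r μ₁ ln(2r/δ)/ε² chosen uniformly at random among all subsets of that size, and independently let J be a subset of {1,…,T} of size at least 3 r μ₂ ln(2r/δ)/ε² chosen uniformly at random among all subsets of that size. Then the submatrix X(I,J) (the matrix of entries of X with row index in I and column index in J) has rank r with probability at least (1 − δ)². -/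
open Matrix
open scoped Classical

/-- The `(2,∞)`-norm of a matrix: the maximum Euclidean norm of a row. -/
noncomputable def rowNorm2Inf {m n : Type*} [Fintype m] [Fintype n] (A : Matrix m n ℝ) : ℝ :=
  ⨆ i, Real.sqrt (∑ j, A i j ^ 2)

/-- `IsThinSVD X r U S V` : `X = U S Vᵀ` is a thin singular value decomposition of the
rank-`r` matrix `X`. -/
def IsThinSVD {m n : Type*} [Fintype m] [Fintype n] (X : Matrix m n ℝ) (r : ℕ)
    (U : Matrix m (Fin r) ℝ) (S : Matrix (Fin r) (Fin r) ℝ) (V : Matrix n (Fin r) ℝ) : Prop :=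
  X = U * S * Vᵀ ∧ Uᵀ * U = 1 ∧ Vᵀ * V = 1 ∧ S.IsDiag ∧
    (∀ i, 0 < S i i) ∧ ∀ i j : Fin r, i ≤ j → S j j ≤ S i i

/-!
The rows `uᵢ` of a matrix `U` with orthonormal columns form a Parseval frame of `ℝʳ`:
`∑ᵢ ⟪uᵢ, x⟫² = ‖x‖²`. If the rows indexed by `s` span a subspace `K` of codimension `d`, summing
this identity over an orthonormal basis of `Kᗮ` shows that the rows outside `K` carry squared
mass at least `d`; as each row has squared norm at most `μ r / n`, at least `d n / (μ r)` rows
lie outside `K`. Adding a uniformly random new index therefore lowers the codimension with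
probability at least `d / (μ r)`, so the average codimension of an `m`-subset is at most
`r (1 - 1/(μ r))^m ≤ r exp(-m/(μ r))`, which is at most `δ` once `m ≥ μ r log(r/δ)`. Hence
`U(I,:)` has rank `r` except on a proportion `δ` of the `I`, likewise for `V`, and
`X(I,J) = U(I,:) S V(J,:)ᵀ` has rank `r` whenever both factors do.
-/

open Finset Module Submodule
open scoped RealInnerProductSpace

theorem Finset.sum_powersetCard_succ_nsmul {α M : Type*} [Fintype α] [DecidableEq α]
    [AddCommMonoid M] (f : Finset α → M) (k : ℕ) :
    ∑ t ∈ powersetCard (k + 1) univ, (k + 1) • f t =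
      ∑ s ∈ powersetCard k univ, ∑ i ∈ sᶜ, f (insert i s) := by
  have hL : ∀ t ∈ powersetCard (k + 1) (univ : Finset α), (k + 1) • f t = ∑ _i ∈ t, f t := by
    intro t ht
    rw [sum_const, (mem_powersetCard.1 ht).2]
  rw [sum_congr rfl hL, sum_sigma', sum_sigma']
  refine sum_nbij' (fun p => ⟨p.1.erase p.2, p.2⟩) (fun p => ⟨insert p.2 p.1, p.2⟩)
    ?_ ?_ ?_ ?_ ?_
  all_goals
    rintro ⟨t, i⟩ h
    simp only [mem_sigma, mem_powersetCard, mem_compl, subset_univ, true_and] at h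
  · simp [card_erase_of_mem h.2, h.1]
  · simp [card_insert_of_notMem h.2, h.1]
  · simp [insert_erase h.2]
  · simp [erase_insert h.2]
  · simp [insert_erase h.2]

theorem one_sub_inv_pow_mul_le {a d δ : ℝ} {m : ℕ} (ha : 1 ≤ a) (hd : 0 ≤ d) (hδ : 0 < δ)
    (hm : a * Real.log (d / δ) ≤ m) : (1 - a⁻¹) ^ m * d ≤ δ := by
  rcases hd.eq_or_lt with rfl | hd
  · simpa using hδ.le
  have hq : 0 ≤ 1 - a⁻¹ := sub_nonneg.2 (inv_le_one_of_one_le₀ ha)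
  calc (1 - a⁻¹) ^ m * d ≤ Real.exp (-a⁻¹) ^ m * d := by
        gcongr
        linarith [Real.add_one_le_exp (-a⁻¹)]
    _ = Real.exp (-(m / a)) * d := by rw [← Real.exp_nat_mul]; ring_nf
    _ ≤ Real.exp (-Real.log (d / δ)) * d := by
        gcongr
        rwa [le_div_iff₀ (by linarith), mul_comm]
    _ = δ := by
        rw [Real.exp_neg, Real.exp_log (by positivity)]
        field_simp

section Frame

variable {ι E : Type*} [NormedAddCommGroup E] [InnerProductSpace ℝ E]

def IsParsevalFrame [Fintype ι] (v : ι → E) : Prop :=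
  ∀ x, ∑ i, ⟪v i, x⟫ ^ 2 = ‖x‖ ^ 2

noncomputable def spanCodim (v : ι → E) (s : Finset ι) : ℕ :=
  finrank ℝ E - finrank ℝ (span ℝ (v '' s))

variable [FiniteDimensional ℝ E]

theorem spanCodim_insert_le (v : ι → E) (s : Finset ι) (i : ι) :
    spanCodim v (insert i s) ≤ spanCodim v s := by
  unfold spanCodim
  gcongr
  exact Submodule.finrank_mono (span_mono (by simp [Set.image_insert_eq]))

theorem spanCodim_eq_finrank_orthogonal (v : ι → E) (s : Finset ι) :
    spanCodim v s = finrank ℝ (span ℝ (v '' s))ᗮ := by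
  have hadd := (span ℝ (v '' s)).finrank_add_finrank_orthogonal
  unfold spanCodim
  omega

variable {v : ι → E}

theorem spanCodim_insert_lt (s : Finset ι) {i : ι} (hi : v i ∉ span ℝ (v '' s)) :
    spanCodim v (insert i s) < spanCodim v s := by
  have hlt : span ℝ (v '' s) < span ℝ (v '' ↑(insert i s)) := by
    rw [coe_insert, Set.image_insert_eq, span_insert]
    exact lt_of_le_of_ne le_sup_right fun h => hi (h ▸ mem_sup_left (mem_span_singleton_self _))
  have hfinrank := Submodule.finrank_lt_finrank_of_lt hlt
  have hle := Submodule.finrank_le (span ℝ (v '' ↑(insert i s)))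
  unfold spanCodim
  omega

variable [Fintype ι] {a : ℝ}

theorem finrank_orthogonal_le_sum_norm_sq (hv : IsParsevalFrame v) (K : Submodule ℝ E) :
    (finrank ℝ Kᗮ : ℝ) ≤ ∑ i with v i ∉ K, ‖v i‖ ^ 2 := by
  set b := stdOrthonormalBasis ℝ Kᗮ
  have hb : Orthonormal ℝ (fun t => (b t : E)) := b.orthonormal.comp_linearIsometry Kᗮ.subtypeₗᵢ
  calc (finrank ℝ Kᗮ : ℝ) = ∑ t, ‖(b t : E)‖ ^ 2 := by simp [hb.1]
    _ = ∑ i, ∑ t, ⟪v i, b t⟫ ^ 2 := by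
      rw [sum_comm]
      exact sum_congr rfl fun t _ => (hv _).symm
    _ = ∑ i with v i ∉ K, ∑ t, ⟪v i, b t⟫ ^ 2 := by
      refine (sum_filter_of_ne fun i _ hne => ?_).symm
      intro hi
      refine hne (sum_eq_zero fun t _ => ?_)
      rw [inner_right_of_mem_orthogonal hi (b t).2]
      ring
    _ ≤ ∑ i with v i ∉ K, ‖v i‖ ^ 2 := by
      gcongr with i
      simpa [real_inner_comm] using hb.sum_inner_products_le (v i) (s := univ)

theorem spanCodim_mul_card_le (hv : IsParsevalFrame v) (ha : 0 ≤ a)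
    (hva : ∀ i, ‖v i‖ ^ 2 ≤ a / Fintype.card ι) (s : Finset ι) :
    (spanCodim v s : ℝ) * Fintype.card ι ≤ #{i | v i ∉ span ℝ (v '' s)} * a := by
  rcases (Fintype.card ι).eq_zero_or_pos with hn | hn
  · rw [hn, Nat.cast_zero, mul_zero]
    positivity
  have hcodim : (spanCodim v s : ℝ) ≤ #{i | v i ∉ span ℝ (v '' s)} * (a / Fintype.card ι) :=
    calc (spanCodim v s : ℝ) ≤ ∑ i with v i ∉ span ℝ (v '' s), ‖v i‖ ^ 2 := by
          rw [spanCodim_eq_finrank_orthogonal]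
          exact finrank_orthogonal_le_sum_norm_sq hv _
      _ ≤ _ := by
          rw [← nsmul_eq_mul, ← sum_const]
          exact sum_le_sum fun i _ => hva i
  rwa [mul_div_assoc', le_div_iff₀ (by exact_mod_cast hn)] at hcodim

theorem sum_spanCodim_insert_le (hv : IsParsevalFrame v) (ha : 0 < a)
    (hva : ∀ i, ‖v i‖ ^ 2 ≤ a / Fintype.card ι) (s : Finset ι) :
    ∑ i ∈ sᶜ, (spanCodim v (insert i s) : ℝ) ≤ (1 - a⁻¹) * #sᶜ * spanCodim v s := by
  set K := span ℝ (v '' s)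
  have hstep : ∀ i ∈ sᶜ, (spanCodim v (insert i s) : ℝ) ≤
      spanCodim v s - if v i ∉ K then 1 else 0 := by
    intro i _
    split_ifs with hi
    · rw [sub_zero]
      exact_mod_cast spanCodim_insert_le v s i
    · rw [le_sub_iff_add_le]
      exact_mod_cast spanCodim_insert_lt s hi
  have hout : #{i | v i ∉ K} ≤ #{i ∈ sᶜ | v i ∉ K} := by
    refine card_le_card fun i hi => ?_
    simp only [mem_filter, mem_univ, true_and, mem_compl] at hi ⊢
    exact ⟨fun his => hi (subset_span ⟨i, his, rfl⟩), hi⟩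
  have hcard : (#sᶜ : ℝ) ≤ Fintype.card ι := by exact_mod_cast card_le_univ sᶜ
  have hmass := spanCodim_mul_card_le hv ha.le hva s
  calc ∑ i ∈ sᶜ, (spanCodim v (insert i s) : ℝ)
      ≤ ∑ i ∈ sᶜ, ((spanCodim v s : ℝ) - if v i ∉ K then 1 else 0) := sum_le_sum hstep
    _ = #sᶜ * spanCodim v s - #{i ∈ sᶜ | v i ∉ K} := by
      rw [sum_sub_distrib, sum_const, nsmul_eq_mul, sum_boole]
    _ ≤ #sᶜ * spanCodim v s - #sᶜ * spanCodim v s / a := by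
      gcongr
      rw [div_le_iff₀ ha]
      calc (#sᶜ : ℝ) * spanCodim v s ≤ spanCodim v s * Fintype.card ι := by
            rw [mul_comm]; gcongr
        _ ≤ #{i | v i ∉ K} * a := hmass
        _ ≤ #{i ∈ sᶜ | v i ∉ K} * a := by gcongr
    _ = (1 - a⁻¹) * #sᶜ * spanCodim v s := by ring

theorem sum_spanCodim_powersetCard_le (hv : IsParsevalFrame v) (ha : 1 ≤ a)
    (hva : ∀ i, ‖v i‖ ^ 2 ≤ a / Fintype.card ι) (m : ℕ) :
    ∑ s ∈ powersetCard m univ, (spanCodim v s : ℝ) ≤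
      (1 - a⁻¹) ^ m * finrank ℝ E * (Fintype.card ι).choose m := by
  induction m with
  | zero => simp [spanCodim]
  | succ k ih =>
    set n := Fintype.card ι
    have hq : 0 ≤ 1 - a⁻¹ := sub_nonneg.2 (inv_le_one_of_one_le₀ ha)
    have hchoose : ((n - k : ℕ) : ℝ) * n.choose k = (k + 1) * n.choose (k + 1) := by
      rw [mul_comm, mul_comm (k + 1 : ℝ)]
      exact_mod_cast (Nat.choose_succ_right_eq n k).symm
    refine le_of_mul_le_mul_left ?_ (by positivity : (0 : ℝ) < k + 1)
    calc (k + 1 : ℝ) * ∑ s ∈ powersetCard (k + 1) univ, (spanCodim v s : ℝ)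
        = ∑ s ∈ powersetCard k univ, ∑ i ∈ sᶜ, (spanCodim v (insert i s) : ℝ) := by
          rw [← sum_powersetCard_succ_nsmul (fun s => (spanCodim v s : ℝ)), mul_sum]
          simp [nsmul_eq_mul]
      _ ≤ ∑ s ∈ powersetCard k univ, (1 - a⁻¹) * (n - k : ℕ) * (spanCodim v s : ℝ) := by
          refine sum_le_sum fun s hs => ?_
          rw [← (mem_powersetCard.1 hs).2, ← card_compl]
          exact sum_spanCodim_insert_le hv (by linarith) hva s
      _ = (1 - a⁻¹) * (n - k : ℕ) * ∑ s ∈ powersetCard k univ, (spanCodim v s : ℝ) := by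
          rw [mul_sum]
      _ ≤ (1 - a⁻¹) * (n - k : ℕ) * ((1 - a⁻¹) ^ k * finrank ℝ E * n.choose k) := by
          gcongr
      _ = (k + 1) * ((1 - a⁻¹) ^ (k + 1) * finrank ℝ E * n.choose (k + 1)) := by
          rw [pow_succ]
          linear_combination (1 - a⁻¹) ^ k * (1 - a⁻¹) * (finrank ℝ E : ℝ) * hchoose

theorem card_filter_span_ne_top_le (hv : IsParsevalFrame v) (ha : 1 ≤ a)
    (hva : ∀ i, ‖v i‖ ^ 2 ≤ a / Fintype.card ι) (m : ℕ) :
    (#((powersetCard m univ).filter fun s : Finset ι => span ℝ (v '' s) ≠ ⊤) : ℝ) ≤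
      (1 - a⁻¹) ^ m * finrank ℝ E * (Fintype.card ι).choose m := by
  refine le_trans ?_ (sum_spanCodim_powersetCard_le hv ha hva m)
  rw [natCast_card_filter]
  gcongr with s
  split_ifs with hs
  · have hlt := Submodule.finrank_lt hs
    have hcodim : 1 ≤ spanCodim v s := by unfold spanCodim; omega
    exact_mod_cast hcodim
  · positivity

theorem le_card_filter_span_eq_top (hv : IsParsevalFrame v) (ha : 1 ≤ a)
    (hva : ∀ i, ‖v i‖ ^ 2 ≤ a / Fintype.card ι) {δ : ℝ} (hδ : 0 < δ) {m : ℕ}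
    (hm : a * Real.log (finrank ℝ E / δ) ≤ m) :
    (1 - δ) * (Fintype.card ι).choose m ≤
      #((powersetCard m univ).filter fun s : Finset ι => span ℝ (v '' s) = ⊤) := by
  have hbad := (card_filter_span_ne_top_le hv ha hva m).trans <| mul_le_mul_of_nonneg_right
    (one_sub_inv_pow_mul_le ha (Nat.cast_nonneg _) hδ hm) (Nat.cast_nonneg _)
  have hsplit := congrArg (Nat.cast : ℕ → ℝ) <| card_filter_add_card_filter_not
    (s := powersetCard m (univ : Finset ι)) (fun s : Finset ι => span ℝ (v '' s) = ⊤)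
  push_cast [card_powersetCard, card_univ] at hsplit
  linarith

end Frame

theorem Matrix.rank_mul_eq_left_of_rank_eq_card {K l m n : Type*} [Field K] [Fintype m]
    [Fintype n] (A : Matrix l m K) {B : Matrix m n K} (hB : B.rank = Fintype.card m) :
    (A * B).rank = A.rank := by
  have hsurj : LinearMap.range B.mulVecLin = ⊤ := by
    rw [Submodule.eq_top_iff_finrank_eq, Module.finrank_fintype_fun_eq_card]
    exact hB
  rw [rank, rank, mulVecLin_mul, LinearMap.range_comp_of_range_eq_top _ hsurj]

section Rows

variable {m κ : Type*} [Fintype κ]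

theorem norm_toLp_row_sq (U : Matrix m κ ℝ) (i : m) :
    ‖WithLp.toLp 2 (U i)‖ ^ 2 = ∑ j, U i j ^ 2 := by
  simp [EuclideanSpace.norm_sq_eq]

theorem rank_submatrix_eq_card_iff_span_eq_top (U : Matrix m κ ℝ) (s : Finset m) :
    (U.submatrix (fun i : s => (i : m)) id).rank = Fintype.card κ ↔
      span ℝ ((fun i => WithLp.toLp 2 (U i)) '' s) = ⊤ := by
  have hspan : span ℝ ((fun i => WithLp.toLp 2 (U i)) '' s) =
      (span ℝ (Set.range (U.submatrix (fun i : s => (i : m)) id).row)).map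
        (WithLp.linearEquiv 2 ℝ (κ → ℝ)).symm.toLinearMap := by
    rw [Submodule.map_span, ← Set.range_comp]
    congr 1
    ext x
    simp only [Set.mem_image, Set.mem_range, Subtype.exists]
    exact ⟨fun ⟨i, hi, h⟩ => ⟨i, hi, h⟩, fun ⟨i, hi, h⟩ => ⟨i, hi, h⟩⟩
  rw [rank_eq_finrank_span_row, hspan, Submodule.eq_top_iff_finrank_eq (W := Submodule.map _ _),
    LinearEquiv.finrank_map_eq, finrank_euclideanSpace]

variable [Fintype m]

theorem sum_sq_le_of_rowNorm2Inf_le {U : Matrix m κ ℝ} {c : ℝ} (hc : 0 ≤ c)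
    (hU : rowNorm2Inf U ≤ √c) (i : m) : ∑ j, U i j ^ 2 ≤ c := by
  have hi : √(∑ j, U i j ^ 2) ≤ rowNorm2Inf U :=
    le_ciSup (f := fun i => √(∑ j, U i j ^ 2)) (Set.finite_range _).bddAbove i
  exact (Real.sqrt_le_sqrt_iff hc).1 (hi.trans hU)

variable [DecidableEq κ]

theorem isParsevalFrame_toLp_row {U : Matrix m κ ℝ} (hU : Uᵀ * U = 1) :
    IsParsevalFrame fun i => WithLp.toLp 2 (U i) := by
  intro x
  have hinner : ∀ i, ⟪WithLp.toLp 2 (U i), x⟫ = (U *ᵥ x.ofLp) i := fun i => by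
    simp [EuclideanSpace.inner_eq_star_dotProduct, mulVec, dotProduct_comm]
  calc ∑ i, ⟪WithLp.toLp 2 (U i), x⟫ ^ 2 = (U *ᵥ x.ofLp) ⬝ᵥ (U *ᵥ x.ofLp) := by
        simp [hinner, dotProduct, sq]
    _ = x.ofLp ⬝ᵥ x.ofLp := by
        rw [dotProduct_mulVec, ← vecMul_transpose, vecMul_vecMul, hU, vecMul_one]
    _ = ‖x‖ ^ 2 := by simp [EuclideanSpace.norm_sq_eq, dotProduct, ← sq]

theorem le_card_filter_rank_submatrix_eq {U : Matrix m κ ℝ} (hU : Uᵀ * U = 1) {μ : ℝ}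
    (hμ : 1 ≤ μ) (hrow : rowNorm2Inf U ≤ √(μ * Fintype.card κ / Fintype.card m)) {δ : ℝ}
    (hδ : 0 < δ) {k : ℕ} (hk : μ * Fintype.card κ * Real.log (Fintype.card κ / δ) ≤ k) :
    (1 - δ) * (Fintype.card m).choose k ≤
      #((powersetCard k univ).filter fun s : Finset m =>
        (U.submatrix (fun i : s => (i : m)) id).rank = Fintype.card κ) := by
  rcases (Fintype.card κ).eq_zero_or_pos with hκ | hκ
  · have hall : ∀ s : Finset m, (U.submatrix (fun i : s => (i : m)) id).rank = Fintype.card κ :=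
      fun s => le_antisymm (rank_le_card_width _) (hκ ▸ Nat.zero_le _)
    rw [filter_true_of_mem fun s _ => hall s, card_powersetCard, card_univ]
    exact mul_le_of_le_one_left (Nat.cast_nonneg _) (by linarith)
  have hcard : (1 : ℝ) ≤ Fintype.card κ := by exact_mod_cast hκ
  have hnorm : ∀ i, ‖WithLp.toLp 2 (U i)‖ ^ 2 ≤ μ * Fintype.card κ / Fintype.card m := fun i => by
    rw [norm_toLp_row_sq]
    exact sum_sq_le_of_rowNorm2Inf_le (by positivity) hrow i
  have hk' : μ * Fintype.card κ * Real.log (finrank ℝ (EuclideanSpace ℝ κ) / δ) ≤ k := by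
    rwa [finrank_euclideanSpace]
  simp only [rank_submatrix_eq_card_iff_span_eq_top]
  exact le_card_filter_span_eq_top (v := fun i => WithLp.toLp 2 (U i)) (isParsevalFrame_toLp_row hU)
    (one_le_mul_of_one_le_of_one_le hμ hcard) hnorm hδ hk'

end Rows

theorem IsThinSVD.rank_submatrix {m n p q : Type*} [Fintype m] [Fintype n] [Fintype p]
    [Fintype q] {X : Matrix m n ℝ} {r : ℕ} {U : Matrix m (Fin r) ℝ} {S : Matrix (Fin r) (Fin r) ℝ}
    {V : Matrix n (Fin r) ℝ} (h : IsThinSVD X r U S V) (f : p → m) (g : q → n)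
    (hU : (U.submatrix f id).rank = r) (hV : (V.submatrix g id).rank = r) :
    (X.submatrix f g).rank = r := by
  obtain ⟨rfl, -, -, hdiag, hpos, -⟩ := h
  have hS : S.det ≠ 0 := by
    rw [← hdiag.diagonal_diag, det_diagonal]
    exact prod_ne_zero_iff.2 fun i _ => (hpos i).ne'
  have hVt : (V.submatrix g id)ᵀ.rank = Fintype.card (Fin r) := by
    rw [rank_transpose, hV, Fintype.card_fin]
  rw [submatrix_mul _ _ _ id _ Function.bijective_id,
    submatrix_mul _ _ _ id _ Function.bijective_id, submatrix_id_id, ← transpose_submatrix, rank_mul_eq_left_of_rank_eq_card _ hVt,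
    rank_mul_eq_left_of_det_ne_zero _ _ hS, hU]

theorem mul_log_div_le_three_mul_log_div_sq {r : ℕ} {μ δ ε : ℝ} (hμ : 0 ≤ μ) (hδ0 : 0 < δ)
    (hδ1 : δ < 1) (hε0 : 0 < ε) (hε1 : ε < 1) :
    μ * r * Real.log (r / δ) ≤ 3 * r * μ * Real.log (2 * r / δ) / ε ^ 2 := by
  rcases r.eq_zero_or_pos with rfl | hr
  · simp
  have hr1 : (1 : ℝ) ≤ r := by exact_mod_cast hr
  have hlog0 : 0 ≤ Real.log (r / δ) := Real.log_nonneg (by rw [le_div_iff₀ hδ0]; linarith)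
  have hlog : Real.log (r / δ) ≤ Real.log (2 * r / δ) :=
    Real.log_le_log (by positivity) (by gcongr; linarith)
  have hμr : 0 ≤ μ * r := by positivity
  have hbound : 0 ≤ μ * r * Real.log (2 * r / δ) := mul_nonneg hμr (hlog0.trans hlog)
  calc μ * r * Real.log (r / δ) ≤ μ * r * Real.log (2 * r / δ) :=
        mul_le_mul_of_nonneg_left hlog hμr
    _ ≤ 3 * r * μ * Real.log (2 * r / δ) := by linarith
    _ ≤ 3 * r * μ * Real.log (2 * r / δ) / ε ^ 2 :=
        le_div_self (by linarith) (by positivity) (pow_le_one₀ hε0.le hε1.le)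

theorem stmt1_general {N T r : ℕ} (X : Matrix (Fin N) (Fin T) ℝ)
    (U : Matrix (Fin N) (Fin r) ℝ) (S : Matrix (Fin r) (Fin r) ℝ)
    (V : Matrix (Fin T) (Fin r) ℝ) (hsvd : IsThinSVD X r U S V)
    (μ₁ μ₂ : ℝ) (hμ₁ : 1 ≤ μ₁) (hμ₂ : 1 ≤ μ₂)
    (hU : rowNorm2Inf U ≤ Real.sqrt (μ₁ * r / N))
    (hV : rowNorm2Inf V ≤ Real.sqrt (μ₂ * r / T))
    (δ ε : ℝ) (hδ0 : 0 < δ) (hδ1 : δ < 1) (hε0 : 0 < ε) (hε1 : ε < 1)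
    (mI mJ : ℕ) (hmIN : mI ≤ N) (hmJT : mJ ≤ T)
    (hmI : 3 * r * μ₁ * Real.log (2 * r / δ) / ε ^ 2 ≤ (mI : ℝ))
    (hmJ : 3 * r * μ₂ * Real.log (2 * r / δ) / ε ^ 2 ≤ (mJ : ℝ)) :
    (1 - δ) ^ 2 ≤
      (((Finset.powersetCard mI (Finset.univ : Finset (Fin N)) ×ˢ
            Finset.powersetCard mJ (Finset.univ : Finset (Fin T))).filter
          (fun p : Finset (Fin N) × Finset (Fin T) =>
            (X.submatrix (fun i : ↥p.1 => (i : Fin N))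
              (fun j : ↥p.2 => (j : Fin T))).rank = r)).card : ℝ) /
        (((Finset.powersetCard mI (Finset.univ : Finset (Fin N))).card : ℝ) *
          ((Finset.powersetCard mJ (Finset.univ : Finset (Fin T))).card : ℝ)) := by
  have hsample : ∀ μ : ℝ, 1 ≤ μ → ∀ m : ℕ, 3 * r * μ * Real.log (2 * r / δ) / ε ^ 2 ≤ m →
      μ * Fintype.card (Fin r) * Real.log (Fintype.card (Fin r) / δ) ≤ m := fun μ hμ m hm => by
    rw [Fintype.card_fin]
    exact (mul_log_div_le_three_mul_log_div_sq (by linarith) hδ0 hδ1 hε0 hε1).trans hm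
  have hI := le_card_filter_rank_submatrix_eq hsvd.2.1 hμ₁ (by simpa only [Fintype.card_fin])
    hδ0 (hsample μ₁ hμ₁ mI hmI)
  have hJ := le_card_filter_rank_submatrix_eq hsvd.2.2.1 hμ₂ (by simpa only [Fintype.card_fin])
    hδ0 (hsample μ₂ hμ₂ mJ hmJ)
  simp only [card_powersetCard, card_univ, Fintype.card_fin] at hI hJ ⊢
  have hpos : (0 : ℝ) < N.choose mI * T.choose mJ := by
    have := Nat.choose_pos hmIN
    have := Nat.choose_pos hmJT
    positivity
  rw [le_div_iff₀ hpos]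
  calc (1 - δ) ^ 2 * (N.choose mI * T.choose mJ : ℝ)
      = ((1 - δ) * N.choose mI) * ((1 - δ) * T.choose mJ) := by ring
    _ ≤ _ * _ := mul_le_mul hI hJ (mul_nonneg (by linarith) (Nat.cast_nonneg _)) (Nat.cast_nonneg _)
    _ ≤ _ := by
      rw [← Nat.cast_mul, ← card_product, Nat.cast_le]
      refine card_le_card fun p hp => ?_
      simp only [mem_product, mem_filter] at hp ⊢
      exact ⟨⟨hp.1.1, hp.2.1⟩, hsvd.rank_submatrix _ _ hp.1.2 hp.2.2⟩

/-- with `I ⊆ {1,…,N}` of size `mI ≥ 3 r μ₁ ln(2r/δ)/ε²` and independently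
`J ⊆ {1,…,T}` of size `mJ ≥ 3 r μ₂ ln(2r/δ)/ε²`, each uniformly random among subsets of
that size, the submatrix `X(I,J)` has rank `r` with probability at least `(1-δ)²`. -/
theorem stmt1 {N T r : ℕ} (X : Matrix (Fin N) (Fin T) ℝ)
    (hrank : X.rank = r) (hr : r < min N T)
    (U : Matrix (Fin N) (Fin r) ℝ) (S : Matrix (Fin r) (Fin r) ℝ)
    (V : Matrix (Fin T) (Fin r) ℝ) (hsvd : IsThinSVD X r U S V)
    (μ₁ μ₂ : ℝ) (hμ₁ : 1 ≤ μ₁) (hμ₂ : 1 ≤ μ₂)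
    (hU : rowNorm2Inf U ≤ Real.sqrt (μ₁ * r / N))
    (hV : rowNorm2Inf V ≤ Real.sqrt (μ₂ * r / T))
    (δ ε : ℝ) (hδ0 : 0 < δ) (hδ1 : δ < 1) (hε0 : 0 < ε) (hε1 : ε < 1)
    (mI mJ : ℕ) (hmIN : mI ≤ N) (hmJT : mJ ≤ T)
    (hmI : 3 * r * μ₁ * Real.log (2 * r / δ) / ε ^ 2 ≤ (mI : ℝ))
    (hmJ : 3 * r * μ₂ * Real.log (2 * r / δ) / ε ^ 2 ≤ (mJ : ℝ)) :
    (1 - δ) ^ 2 ≤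
      (((Finset.powersetCard mI (Finset.univ : Finset (Fin N)) ×ˢ
            Finset.powersetCard mJ (Finset.univ : Finset (Fin T))).filter
          (fun p : Finset (Fin N) × Finset (Fin T) =>
            (X.submatrix (fun i : ↥p.1 => (i : Fin N))
              (fun j : ↥p.2 => (j : Fin T))).rank = r)).card : ℝ) /
        (((Finset.powersetCard mI (Finset.univ : Finset (Fin N))).card : ℝ) *
          ((Finset.powersetCard mJ (Finset.univ : Finset (Fin T))).card : ℝ)) :=
  stmt1_general X U S V hsvd μ₁ μ₂ hμ₁ hμ₂ hU hV δ ε hδ0 hδ1 hε0 hε1 mI mJ hmIN hmJT hmI hmJ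
end

section
/- Let X_R ∈ ℝ^{m×T} be a matrix of rank r with thin SVD X_R = U_R Σ_R V_Rᵀ and largest singular value σ₁(X_R), let J ⊆ {1,…,T}, and suppose the column submatrix X_{RC} = X_R(:,J) also has rank r with smallest nonzero singular value σ_min(X_{RC}). Then for any thin SVD X_{RC} = U_{RC} Σ_{RC} V_{RC}ᵀ, one has ‖V_{RC}‖_{2,∞} ≤ (σ₁(X_R)/σ_min(X_{RC})) · ‖V_R(J,:)‖_{2,∞} ≤ (σ₁(X_R)/σ_min(X_{RC})) · ‖V_R‖_{2,∞}. -/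
open Matrix

/-- If `U` has orthonormal columns, then `U` preserves the Euclidean norm. -/
lemma sq_sum_mulVec {m r : ℕ} (U : Matrix (Fin m) (Fin r) ℝ) (hU : Uᵀ * U = 1)
    (v : Fin r → ℝ) : ∑ a, (∑ k, U a k * v k) ^ 2 = ∑ k, v k ^ 2 := by
  have h1 : ∀ a, (∑ k, U a k * v k) = (U *ᵥ v) a := fun a => rfl
  calc ∑ a, (∑ k, U a k * v k) ^ 2 = (U *ᵥ v) ⬝ᵥ (U *ᵥ v) := by
        simp only [h1, dotProduct, sq]
      _ = ((U *ᵥ v) ᵥ* U) ⬝ᵥ v := dotProduct_mulVec _ _ _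
      _ = (Uᵀ *ᵥ (U *ᵥ v)) ⬝ᵥ v := by rw [mulVec_transpose]
      _ = ((Uᵀ * U) *ᵥ v) ⬝ᵥ v := by rw [mulVec_mulVec]
      _ = v ⬝ᵥ v := by rw [hU, one_mulVec]
      _ = ∑ k, v k ^ 2 := by simp [dotProduct, sq]

/-- If `U` has orthonormal columns, then `Uᵀ` is a contraction. -/
lemma sq_sum_contract {m r : ℕ} (U : Matrix (Fin m) (Fin r) ℝ) (hU : Uᵀ * U = 1)
    (c : Fin m → ℝ) : ∑ k, (∑ a, U a k * c a) ^ 2 ≤ ∑ a, c a ^ 2 := by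
  set u : Fin r → ℝ := Uᵀ *ᵥ c with hu
  have hu' : ∀ k, u k = ∑ a, U a k * c a := by
    intro k; simp [hu, mulVec, dotProduct, transpose_apply]
  have hcross : c ⬝ᵥ (U *ᵥ u) = ∑ k, u k ^ 2 := by
    rw [dotProduct_mulVec, ← mulVec_transpose, ← hu]
    simp [dotProduct, sq]
  have hUu : ∑ a, ((U *ᵥ u) a) ^ 2 = ∑ k, u k ^ 2 := by
    have := sq_sum_mulVec U hU u
    simpa [mulVec, dotProduct] using this
  have key : ∑ a, (c a - (U *ᵥ u) a) ^ 2 = ∑ a, c a ^ 2 - ∑ k, u k ^ 2 := by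
    have expand : ∀ a, (c a - (U *ᵥ u) a) ^ 2
        = c a ^ 2 - 2 * (c a * (U *ᵥ u) a) + ((U *ᵥ u) a) ^ 2 := by
      intro a; ring
    rw [Finset.sum_congr rfl fun a _ => expand a]
    rw [Finset.sum_add_distrib, Finset.sum_sub_distrib, ← Finset.mul_sum]
    have : ∑ a, c a * (U *ᵥ u) a = c ⬝ᵥ (U *ᵥ u) := rfl
    rw [this, hcross, hUu]; ring
  have hnn : 0 ≤ ∑ a, (c a - (U *ᵥ u) a) ^ 2 :=
    Finset.sum_nonneg fun a _ => sq_nonneg _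
  have : ∑ k, u k ^ 2 ≤ ∑ a, c a ^ 2 := by linarith [key ▸ hnn]
  calc ∑ k, (∑ a, U a k * c a) ^ 2 = ∑ k, u k ^ 2 := by
        exact Finset.sum_congr rfl fun k _ => by rw [hu' k]
      _ ≤ ∑ a, c a ^ 2 := this

/-- let `X_R ∈ ℝ^{m×T}` have rank `r` with thin SVD `X_R = U_R Σ_R V_Rᵀ`
(largest singular value `σ₁(X_R) = ⨆ i, Σ_R i i`), let `J ⊆ {1,…,T}`, and suppose the
column submatrix `X_{RC} = X_R(:,J)` also has rank `r`.  Then for any thin SVD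
`X_{RC} = U_{RC} Σ_{RC} V_{RC}ᵀ` (so that `σ_min(X_{RC}) = ⨅ i, Σ_{RC} i i`),
`‖V_{RC}‖_{2,∞} ≤ (σ₁(X_R)/σ_min(X_{RC})) ‖V_R(J,:)‖_{2,∞}
  ≤ (σ₁(X_R)/σ_min(X_{RC})) ‖V_R‖_{2,∞}`. -/
theorem stmt13 {m T r : ℕ} (XR : Matrix (Fin m) (Fin T) ℝ) (hrankR : XR.rank = r)
    (UR : Matrix (Fin m) (Fin r) ℝ) (SR : Matrix (Fin r) (Fin r) ℝ)
    (VR : Matrix (Fin T) (Fin r) ℝ) (hsvdR : IsThinSVD XR r UR SR VR)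
    (J : Finset (Fin T))
    (hrankRC : (XR.submatrix id (fun j : ↥J => (j : Fin T))).rank = r) :
    ∀ (URC : Matrix (Fin m) (Fin r) ℝ) (SRC : Matrix (Fin r) (Fin r) ℝ)
      (VRC : Matrix ↥J (Fin r) ℝ),
      IsThinSVD (XR.submatrix id (fun j : ↥J => (j : Fin T))) r URC SRC VRC →
      rowNorm2Inf VRC ≤
          ((⨆ i, SR i i) / (⨅ i, SRC i i)) *
            rowNorm2Inf (VR.submatrix (fun j : ↥J => (j : Fin T)) id) ∧
        ((⨆ i, SR i i) / (⨅ i, SRC i i)) *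
            rowNorm2Inf (VR.submatrix (fun j : ↥J => (j : Fin T)) id) ≤
          ((⨆ i, SR i i) / (⨅ i, SRC i i)) * rowNorm2Inf VR := by
  intro URC SRC VRC hsvdRC
  obtain ⟨hXR, hUR, hVR, hSRdiag, hSRpos, -⟩ := hsvdR
  obtain ⟨hXC, hUC, hVC, hSCdiag, hSCpos, -⟩ := hsvdRC
  rcases Nat.eq_zero_or_pos r with hr | hr
  · subst hr
    have e1 : (⨆ i : Fin 0, SR i i) = 0 := Real.iSup_of_isEmpty _
    have e2 : (⨅ i : Fin 0, SRC i i) = 0 := Real.iInf_of_isEmpty _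
    constructor
    · have h0 : rowNorm2Inf VRC ≤ 0 := Real.iSup_le (fun i => by simp) le_rfl
      simpa [e1, e2] using h0
    · simp [e1, e2]
  have _ : Nonempty (Fin r) := ⟨⟨0, hr⟩⟩
  have hσ1_ub : ∀ k, SR k k ≤ ⨆ i, SR i i := fun k =>
    le_ciSup (f := fun i => SR i i) (Finite.bddAbove_range _) k
  have hσ1pos : 0 < ⨆ i, SR i i := lt_of_lt_of_le (hSRpos ⟨0, hr⟩) (hσ1_ub _)
  have hσm_lb : ∀ k, (⨅ i, SRC i i) ≤ SRC k k := fun k =>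
    ciInf_le (f := fun i => SRC i i) (Finite.bddBelow_range _) k
  have hσmpos : 0 < ⨅ i, SRC i i := by
    obtain ⟨k0, -, hk0⟩ := Finset.exists_min_image Finset.univ (fun k => SRC k k)
      ⟨⟨0, hr⟩, Finset.mem_univ _⟩
    exact lt_of_lt_of_le (hSCpos k0) (le_ciInf fun k => hk0 k (Finset.mem_univ k))
  set σ1 := ⨆ i, SR i i
  set σm := ⨅ i, SRC i i
  have hfac : 0 ≤ σ1 / σm := div_nonneg hσ1pos.le hσmpos.le
  -- pointwise bound on rows
  have hpoint : ∀ i : ↥J, Real.sqrt (∑ k, VRC i k ^ 2)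
      ≤ (σ1 / σm) * Real.sqrt (∑ k, VR (i : Fin T) k ^ 2) := by
    intro i
    set c : Fin m → ℝ := fun a => XR a (i : Fin T) with hc
    have hmateq : SRC * VRCᵀ = URCᵀ * (XR.submatrix id (fun j : ↥J => (j : Fin T))) := by
      rw [hXC, ← Matrix.mul_assoc, ← Matrix.mul_assoc, hUC, Matrix.one_mul]
    have hentry : ∀ k, SRC k k * VRC i k = ∑ a, URC a k * c a := by
      intro k
      have h1 := congrFun (congrFun hmateq k) i
      simp only [Matrix.mul_apply, Matrix.transpose_apply, Matrix.submatrix_apply,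
        id_eq] at h1
      have h2 : ∑ l, SRC k l * VRC i l = SRC k k * VRC i k := by
        refine Finset.sum_eq_single k (fun l _ hl => ?_) (fun h => absurd (Finset.mem_univ k) h)
        rw [hSCdiag (Ne.symm hl), zero_mul]
      rw [← h2, h1]
    have hVRCik : ∀ k, VRC i k = (∑ a, URC a k * c a) / SRC k k := by
      intro k
      rw [eq_div_iff (hSCpos k).ne', ← hentry k]; ring
    have hca : ∀ a, c a = ∑ k, UR a k * (SR k k * VR (i : Fin T) k) := by
      intro a
      have h1 := congrFun (congrFun hXR a) (i : Fin T)
      simp only [Matrix.mul_apply, Matrix.transpose_apply] at h1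
      rw [hc]
      simp only [h1]
      refine Finset.sum_congr rfl fun k _ => ?_
      have h2 : ∑ l, UR a l * SR l k = UR a k * SR k k := by
        refine Finset.sum_eq_single k (fun l _ hl => ?_) (fun h => absurd (Finset.mem_univ k) h)
        rw [hSRdiag hl, mul_zero]
      rw [h2]; ring
    have hcsum : ∑ a, c a ^ 2 = ∑ k, (SR k k * VR (i : Fin T) k) ^ 2 := by
      rw [Finset.sum_congr rfl fun a _ => by rw [hca a]]
      exact sq_sum_mulVec UR hUR _
    have h1 : ∑ k, VRC i k ^ 2 ≤ (σ1 / σm) ^ 2 * ∑ k, VR (i : Fin T) k ^ 2 := by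
      calc ∑ k, VRC i k ^ 2 = ∑ k, (∑ a, URC a k * c a) ^ 2 / SRC k k ^ 2 := by
            refine Finset.sum_congr rfl fun k _ => ?_
            rw [hVRCik k, div_pow]
          _ ≤ ∑ k, (∑ a, URC a k * c a) ^ 2 / σm ^ 2 := by
            refine Finset.sum_le_sum fun k _ => ?_
            exact div_le_div_of_nonneg_left (sq_nonneg _) (pow_pos hσmpos 2)
              (pow_le_pow_left₀ hσmpos.le (hσm_lb k) 2)
          _ = (∑ k, (∑ a, URC a k * c a) ^ 2) / σm ^ 2 := by rw [← Finset.sum_div]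
          _ ≤ (∑ a, c a ^ 2) / σm ^ 2 := by
            gcongr
            exact sq_sum_contract URC hUC c
          _ = (∑ k, (SR k k * VR (i : Fin T) k) ^ 2) / σm ^ 2 := by rw [hcsum]
          _ ≤ (∑ k, σ1 ^ 2 * VR (i : Fin T) k ^ 2) / σm ^ 2 := by
            gcongr with k _
            rw [mul_pow]
            exact mul_le_mul_of_nonneg_right
              (pow_le_pow_left₀ (hSRpos k).le (hσ1_ub k) 2) (sq_nonneg _)
          _ = (σ1 / σm) ^ 2 * ∑ k, VR (i : Fin T) k ^ 2 := by
            rw [← Finset.mul_sum, div_pow]; ring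
    have h2 := Real.sqrt_le_sqrt h1
    rwa [Real.sqrt_mul (sq_nonneg _), Real.sqrt_sq hfac] at h2
  constructor
  · refine Real.iSup_le (fun i => ?_) ?_
    · refine (hpoint i).trans ?_
      refine mul_le_mul_of_nonneg_left ?_ hfac
      have := le_ciSup (f := fun i : ↥J =>
        Real.sqrt (∑ j, (VR.submatrix (fun j : ↥J => (j : Fin T)) id) i j ^ 2))
        (Finite.bddAbove_range _) i
      simpa [rowNorm2Inf, Matrix.submatrix_apply] using this
    · exact mul_nonneg hfac (Real.iSup_nonneg fun _ => Real.sqrt_nonneg _)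
  · refine mul_le_mul_of_nonneg_left ?_ hfac
    refine Real.iSup_le (fun i => ?_) ?_
    · have := le_ciSup (f := fun t : Fin T => Real.sqrt (∑ j, VR t j ^ 2))
        (Finite.bddAbove_range _) (i : Fin T)
      simpa [rowNorm2Inf, Matrix.submatrix_apply] using this
    · exact Real.iSup_nonneg fun _ => Real.sqrt_nonneg _
end
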